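/- arXiv:1109.1102 — 3 statements merged into one kernel-verified Lean document; each statement's English description precedes it below -/
import Mathlib

section
/- Suppose each A_i(t) is diagonal, the Liao-type exponent satisfies χ < 0 for some Δ-sequence {n_s}, and set δ := |χ|·exp(−2γΔT*). If 0 ≤ L < δ, then for every x_0 ∈ ℝ^d, every solution x(t) of the switched quasi-linear system ẋ(t) = A_{u(t)}(t)x(t) + F_{u(t)}(t,x(t)) with x(0) = x_0 satisfies limsup_{t→∞} (1/t)·log‖x(t)‖ ≤ χ + (L/δ)|χ| < 0; in particular the system is globally asymptotically exponentially stable. -/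
noncomputable def mulVecE {d : ℕ} (M : Matrix (Fin d) (Fin d) ℝ)
    (v : EuclideanSpace ℝ (Fin d)) : EuclideanSpace ℝ (Fin d) :=
  (EuclideanSpace.equiv (Fin d) ℝ).symm (M.mulVec (EuclideanSpace.equiv (Fin d) ℝ v))

/-!
Each coordinate of the diagonal system is a scalar linear equation, so by variation of constants
`x_j(t) = e^{φ_j(t) - φ_j(s)} x_j(s) + ∫_s^t e^{φ_j(t) - φ_j(r)} f_j(r) dr` with `φ_j = ∫₀ a_j`.
On the `k`-th block `(τ_{n_k}, τ_{n_{k+1}}]` follow the diagonal entry whose integral over the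
block is largest, and let `ψ` be the primitive of this piecewise choice. At the block ends `ψ`
is the partial sum of block maxima, so `ψ(t) ≤ (χ + ε) t` for large `t`. Moreover `φ_j - ψ`
grows at rate at most `γ` and does not increase across a whole block, whence
`φ_j(t) - φ_j(r) ≤ ψ(t) - ψ(r) + 2γΔT*`. With this bound `‖x(t)‖ e^{-ψ(t)}` satisfies a Grönwall
inequality with rate `e^{2γΔT*} L = L|χ|/δ`, which gives the exponent `χ + (L/δ)|χ|`.
The same argument run backwards with the crude rate `α` gives `‖x(t)‖ ≥ ‖x₀‖ e^{-(α+L)t}`,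
so `log ‖x(t)‖ / t` is bounded below and its `limsup` is a genuine one.
-/

open Set MeasureTheory Filter Topology Real
open scoped NNReal

noncomputable def blockIndex (e : ℕ → ℝ) (t : ℝ) : ℕ := sInf {k | t ≤ e (k + 1)}

section blockIndex

variable {e : ℕ → ℝ} {t : ℝ}

lemma mem_Icc_blockIndex (he : Tendsto e atTop atTop) (ht : e 0 ≤ t) :
    t ∈ Icc (e (blockIndex e t)) (e (blockIndex e t + 1)) := by
  have hne : {k | t ≤ e (k + 1)}.Nonempty :=
    (((tendsto_add_atTop_iff_nat 1).2 he).eventually_ge_atTop t).exists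
  refine ⟨?_, Nat.sInf_mem hne⟩
  rcases hk : blockIndex e t with _ | k
  · exact ht
  · have : k ∉ {k | t ≤ e (k + 1)} := Nat.notMem_of_lt_sInf (show k < blockIndex e t by omega)
    exact (not_le.1 this).le

lemma blockIndex_eq_of_mem_Ioc (he : StrictMono e) (htop : Tendsto e atTop atTop) {k : ℕ}
    (ht : t ∈ Ioc (e k) (e (k + 1))) : blockIndex e t = k := by
  have h1 : blockIndex e t ≤ k := Nat.sInf_le ht.2
  have h2 : k < blockIndex e t + 1 := he.lt_iff_lt.1 <|
    ht.1.trans_le (mem_Icc_blockIndex htop ((he.monotone k.zero_le).trans ht.1.le)).2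
  omega

lemma tendsto_blockIndex (he : StrictMono e) (htop : Tendsto e atTop atTop) :
    Tendsto (blockIndex e) atTop atTop := by
  refine tendsto_atTop_atTop.2 fun N => ⟨e N + 1, fun t ht => ?_⟩
  by_contra! hN
  have := (mem_Icc_blockIndex htop (by linarith [he.monotone N.zero_le])).2
  linarith [he.monotone (Nat.succ_le_of_lt hN)]

lemma Ioo_blockIndex_mem_nhds (htop : Tendsto e atTop atTop) (ht : e 0 < t) (hte : t ∉ range e) :
    Ioo (e (blockIndex e t)) (e (blockIndex e t + 1)) ∈ 𝓝 t := by
  have hk := mem_Icc_blockIndex htop ht.le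
  exact Ioo_mem_nhds (hk.1.lt_of_ne fun h => hte ⟨_, h⟩) (hk.2.lt_of_ne fun h => hte ⟨_, h.symm⟩)

end blockIndex

lemma sub_le_of_antitone_on_grid {D : ℝ → ℝ} {e : ℕ → ℝ} {γ h : ℝ} (he : Monotone e)
    (hγ : 0 ≤ γ) (hgap : ∀ k, e (k + 1) - e k ≤ h) (hDe : ∀ k, D (e (k + 1)) ≤ D (e k))
    (hD : ∀ p q, e 0 ≤ p → p ≤ q → D q - D p ≤ γ * (q - p)) {i l : ℕ} {r t : ℝ}
    (hr : r ∈ Icc (e i) (e (i + 1))) (ht : t ∈ Icc (e l) (e (l + 1))) (hrt : r ≤ t) :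
    D t - D r ≤ 2 * (γ * h) := by
  have hr0 : e 0 ≤ r := (he i.zero_le).trans hr.1
  have hh : 0 ≤ h := (sub_nonneg.2 (he (Nat.le_succ 0))).trans (hgap 0)
  rcases le_or_gt l i with hli | hil
  · have : t - r ≤ h := by linarith [he (Nat.succ_le_succ hli), hgap i, ht.2, hr.1]
    nlinarith [hD r t hr0 hrt]
  · have h1 := hD r (e (i + 1)) hr0 hr.2
    have h2 : D (e l) ≤ D (e (i + 1)) := antitone_nat_of_succ_le (f := D ∘ e) hDe hil
    have h3 := hD (e l) t (he l.zero_le) ht.1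
    nlinarith [hgap i, hgap l, ht.2, hr.1]

lemma sub_le_mul_of_sub_succ_le {τ : ℕ → ℝ} {T : ℝ} (hτ : ∀ n, τ (n + 1) - τ n ≤ T) {m n : ℕ}
    (hmn : m ≤ n) : τ n - τ m ≤ (n - m : ℕ) * T := by
  induction n, hmn using Nat.le_induction with
  | base => simp
  | succ n hmn ih =>
    rw [Nat.succ_sub hmn]
    push_cast
    linarith [hτ n]

lemma le_mul_exp_of_le_add_mul_integral {v : ℝ → ℝ} {C M a b : ℝ} (hM : 0 ≤ M) (hab : a ≤ b)
    (hv : ContinuousOn v (Icc a b)) (h : ∀ r ∈ Icc a b, v r ≤ C + M * ∫ u in a..r, v u) :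
    v b ≤ C * exp (M * (b - a)) := by
  set W : ℝ → ℝ := fun r => C + M * ∫ u in a..r, v u
  have hW : ContinuousOn W (Icc a b) := by
    refine continuousOn_const.add (continuousOn_const.mul ?_)
    simpa [uIcc_of_le hab] using intervalIntegral.continuousOn_primitive_interval'
      (hv.intervalIntegrable_of_Icc hab) (left_mem_uIcc (a := a) (b := b))
  have hW' : ∀ r ∈ Ico a b, HasDerivWithinAt W (M * v r) (Ici r) r := by
    intro r hr
    have : Fact (r ∈ Icc a b) := ⟨Ico_subset_Icc_self hr⟩
    refine (HasDerivWithinAt.const_mul M ?_).const_add C |>.mono_of_mem_nhdsWithin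
      (Icc_mem_nhdsGE_of_mem hr)
    exact intervalIntegral.integral_hasDerivWithinAt_right
      (hv.mono (uIcc_subset_Icc (left_mem_Icc.2 hab) this.out)).intervalIntegrable
      (hv.stronglyMeasurableAtFilter_nhdsWithin measurableSet_Icc r) (hv r this.out)
  have := le_gronwallBound_of_liminf_deriv_right_le (δ := C) (K := M) (ε := 0) hW
    (fun r hr _ hlt => (hW' r hr).liminf_right_slope_le hlt) (by simp [W])
    (fun r hr => by simpa using mul_le_mul_of_nonneg_left (h r (Ico_subset_Icc_self hr)) hM)
    b (right_mem_Icc.2 hab)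
  rw [gronwallBound_ε0] at this
  exact (h b (right_mem_Icc.2 hab)).trans this

lemma le_mul_exp_of_le_add_mul_integral_rev {v : ℝ → ℝ} {C M a b : ℝ} (hM : 0 ≤ M) (hab : a ≤ b)
    (hv : ContinuousOn v (Icc a b)) (h : ∀ r ∈ Icc a b, v r ≤ C + M * ∫ u in r..b, v u) :
    v a ≤ C * exp (M * (b - a)) := by
  have := le_mul_exp_of_le_add_mul_integral (v := fun r => v (-r)) hM (neg_le_neg hab)
    (hv.comp continuousOn_neg fun r hr => ⟨le_neg.1 hr.2, neg_le.1 hr.1⟩) fun r hr => by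
      simpa [intervalIntegral.integral_comp_neg] using h (-r) ⟨le_neg.1 hr.2, neg_le.1 hr.1⟩
  simpa [sub_eq_add_neg, add_comm] using this

section OffCountable

variable {E : Type*} [NormedAddCommGroup E] {C : Set ℝ} {g : ℝ → E}

lemma aestronglyMeasurable_of_continuousAt_off (hC : C.Countable)
    (hg : ∀ t ∈ Ioi 0 \ C, ContinuousAt g t) :
    AEStronglyMeasurable g (volume.restrict (Ioi 0)) := by
  rw [← Measure.restrict_congr_set (sdiff_null_ae_eq_self (hC.measure_zero volume))]
  exact ContinuousOn.aestronglyMeasurable (fun t ht => (hg t ht).continuousWithinAt)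
    (measurableSet_Ioi.diff hC.measurableSet)

lemma intervalIntegrable_of_norm_le (hg : AEStronglyMeasurable g (volume.restrict (Ioi 0)))
    {b : ℝ → ℝ} {p q : ℝ} (hp : 0 ≤ p) (hq : 0 ≤ q) (hb : IntervalIntegrable b volume p q)
    (hgb : ∀ t > 0, ‖g t‖ ≤ b t) : IntervalIntegrable g volume p q := by
  have hsub : uIoc p q ⊆ Ioi 0 := fun t ht => (le_min hp hq).trans_lt ht.1
  refine hb.mono_fun' (hg.mono_measure (Measure.restrict_mono hsub le_rfl)) ?_
  exact (ae_restrict_iff' measurableSet_uIoc).2 (ae_of_all _ fun t ht => hgb t (hsub ht))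

end OffCountable

section Primitive

variable {C : Set ℝ} {g : ℝ → ℝ} {α : ℝ≥0}

lemma intervalIntegrable_of_continuousAt_off {M : ℝ} (hC : C.Countable)
    (hg : ∀ t ∈ Ioi 0 \ C, ContinuousAt g t) (hgM : ∀ t > 0, |g t| ≤ M) (p q : ℝ) (hp : 0 ≤ p)
    (hq : 0 ≤ q) : IntervalIntegrable g volume p q :=
  intervalIntegrable_of_norm_le (aestronglyMeasurable_of_continuousAt_off hC hg) hp hq
    intervalIntegrable_const hgM

lemma lipschitzOnWith_primitive
    (hint : ∀ p q, 0 ≤ p → 0 ≤ q → IntervalIntegrable g volume p q)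
    (hbd : ∀ t > 0, |g t| ≤ α) : LipschitzOnWith α (fun t => ∫ r in 0..t, g r) (Ici 0) := by
  refine LipschitzOnWith.of_dist_le_mul fun p hp q hq => ?_
  rw [Real.dist_eq, Real.dist_eq, intervalIntegral.integral_interval_sub_left
    (hint 0 p le_rfl hp) (hint 0 q le_rfl hq)]
  simpa only [Real.norm_eq_abs] using intervalIntegral.norm_integral_le_of_norm_le_const
    fun t ht => (Real.norm_eq_abs (g t)).trans_le
      (hbd t ((le_min (mem_Ici.1 hq) (mem_Ici.1 hp)).trans_lt ht.1))

lemma integral_hasDerivAt_of_continuousAt_off (hC : C.Countable)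
    (hg : ∀ t ∈ Ioi 0 \ C, ContinuousAt g t)
    (hint : ∀ p q, 0 ≤ p → 0 ≤ q → IntervalIntegrable g volume p q) {t : ℝ}
    (ht : t ∈ Ioi 0 \ C) : HasDerivAt (fun s => ∫ r in 0..s, g r) (g t) t :=
  intervalIntegral.integral_hasDerivAt_right (hint 0 t le_rfl (le_of_lt ht.1))
    ⟨Ioi 0, Ioi_mem_nhds ht.1, aestronglyMeasurable_of_continuousAt_off hC hg⟩ (hg t ht)

end Primitive

lemma exp_neg_mul_sub_eq_integral {y φ a g : ℝ → ℝ} {C : Set ℝ} {s t : ℝ} (hC : C.Countable)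
    (hst : s ≤ t) (hy : ContinuousOn y (Icc s t)) (hφ : ContinuousOn φ (Icc s t))
    (hg : IntervalIntegrable g volume s t) (hφ' : ∀ r ∈ Ioo s t \ C, HasDerivAt φ (a r) r)
    (hy' : ∀ r ∈ Ioo s t \ C, HasDerivAt y (a r * y r + g r) r) :
    exp (-φ t) * y t - exp (-φ s) * y s = ∫ r in s..t, exp (-φ r) * g r := by
  refine (integral_eq_of_hasDerivAt_off_countable_of_le _ _ hst hC
    ((hφ.neg.rexp).mul hy) (fun r hr => ?_)
    (hg.continuousOn_mul (by rw [uIcc_of_le hst]; exact hφ.neg.rexp))).symm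
  refine (((hφ' r hr).neg.exp).mul (hy' r hr)).congr_deriv ?_
  simp only [Pi.neg_apply]
  ring

lemma norm_toLp_mul_le {ι : Type*} [Fintype ι] {c : ι → ℝ} {M : ℝ} (hM : 0 ≤ M)
    (hc : ∀ j, |c j| ≤ M) (w : EuclideanSpace ℝ ι) :
    ‖(WithLp.toLp 2 fun j => c j * w j : EuclideanSpace ℝ ι)‖ ≤ M * ‖w‖ := by
  refine le_of_pow_le_pow_left₀ two_ne_zero (by positivity) ?_
  rw [mul_pow, EuclideanSpace.norm_sq_eq, EuclideanSpace.norm_sq_eq, Finset.mul_sum]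
  gcongr with j
  rw [norm_mul, mul_pow, Real.norm_eq_abs (c j)]
  gcongr
  exact hc j

lemma norm_le_of_apply_eq_mul_add_integral {d : ℕ} {v w : EuclideanSpace ℝ (Fin d)}
    {G : ℝ → EuclideanSpace ℝ (Fin d)} {c : Fin d → ℝ} {k : Fin d → ℝ → ℝ} {κ ρ : ℝ → ℝ}
    {M s t : ℝ} (hst : s ≤ t) (hM : 0 ≤ M) (hG : IntervalIntegrable G volume s t)
    (hk : ∀ j, ContinuousOn (k j) (Icc s t)) (hκ : ContinuousOn κ (Icc s t))
    (hρ : ContinuousOn ρ (Icc s t)) (hκ0 : ∀ r ∈ Icc s t, 0 ≤ κ r)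
    (hv : ∀ j, v j = c j * w j + ∫ r in s..t, k j r * G r j) (hc : ∀ j, |c j| ≤ M)
    (hkκ : ∀ j, ∀ r ∈ Icc s t, |k j r| ≤ κ r) (hGρ : ∀ r ∈ Ioo s t, ‖G r‖ ≤ ρ r) :
    ‖v‖ ≤ M * ‖w‖ + ∫ r in s..t, κ r * ρ r := by
  set H : ℝ → EuclideanSpace ℝ (Fin d) := fun r => WithLp.toLp 2 fun j => k j r * G r j
  have hk' : ∀ j, ContinuousOn (k j) (uIcc s t) := fun j => uIcc_of_le hst ▸ hk j
  have hH : IntervalIntegrable H volume s t := by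
    rw [intervalIntegrable_iff] at hG ⊢
    refine (ContinuousLinearEquiv.integrable_comp_iff
      (PiLp.continuousLinearEquiv 2 ℝ fun _ : Fin d => ℝ)).1 (Integrable.of_eval fun j => ?_)
    have hGj : IntervalIntegrable (fun r => G r j) volume s t :=
      intervalIntegrable_iff.2 ((EuclideanSpace.proj (𝕜 := ℝ) j).integrable_comp hG)
    exact intervalIntegrable_iff.1 (hGj.continuousOn_mul (hk' j))
  have hvH : v = WithLp.toLp 2 (fun j => c j * w j) + ∫ r in s..t, H r := by
    ext j
    rw [hv j, WithLp.ofLp_add, Pi.add_apply]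
    exact congrArg _ ((EuclideanSpace.proj (𝕜 := ℝ) j).intervalIntegral_comp_comm hH)
  have hHρ : ∀ r ∈ Ioo s t, ‖H r‖ ≤ κ r * ρ r := fun r hr =>
    (norm_toLp_mul_le (hκ0 r (Ioo_subset_Icc_self hr)) (fun j => hkκ j r (Ioo_subset_Icc_self hr))
      (G r)).trans (mul_le_mul_of_nonneg_left (hGρ r hr) (hκ0 r (Ioo_subset_Icc_self hr)))
  calc ‖v‖ ≤ M * ‖w‖ + ‖∫ r in s..t, H r‖ := by
        rw [hvH]; exact (norm_add_le _ _).trans (add_le_add (norm_toLp_mul_le hM hc w) le_rfl)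
    _ ≤ M * ‖w‖ + ∫ r in s..t, κ r * ρ r := by
        gcongr
        refine (intervalIntegral.norm_integral_le_integral_norm hst).trans
          (intervalIntegral.integral_mono_on_of_le_Ioo hst hH.norm ?_ hHρ)
        exact (hκ.mul hρ).intervalIntegrable_of_Icc hst

structure IsDiagonalSolution {d : ℕ} (C : Set ℝ) (a φ : Fin d → ℝ → ℝ)
    (f x : ℝ → EuclideanSpace ℝ (Fin d)) : Prop where
  countable : C.Countable
  continuousOn : ContinuousOn x (Ici 0)
  hasDerivAt : ∀ t ∈ Ioi 0 \ C, HasDerivAt x ((WithLp.toLp 2 fun j => a j t * x t j) + f t) t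
  continuousOn_primitive : ∀ j, ContinuousOn (φ j) (Ici 0)
  hasDerivAt_primitive : ∀ t ∈ Ioi 0 \ C, ∀ j, HasDerivAt (φ j) (a j t) t
  intervalIntegrable : ∀ p q, 0 ≤ p → 0 ≤ q → IntervalIntegrable f volume p q

lemma IsDiagonalSolution.of_continuousAt {d : ℕ} {C : Set ℝ} {a : Fin d → ℝ → ℝ}
    {f x : ℝ → EuclideanSpace ℝ (Fin d)} {α : ℝ≥0} {L : ℝ} (hC : C.Countable)
    (hxc : ContinuousOn x (Ici 0))
    (hxd : ∀ t ∈ Ioi 0 \ C, HasDerivAt x ((WithLp.toLp 2 fun j => a j t * x t j) + f t) t)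
    (ha : ∀ j, ∀ t ∈ Ioi 0 \ C, ContinuousAt (a j) t) (hbd : ∀ j, ∀ t > 0, |a j t| ≤ α)
    (hf : ∀ t ∈ Ioi 0 \ C, ContinuousAt f t) (hfL : ∀ t > 0, ‖f t‖ ≤ L * ‖x t‖) :
    IsDiagonalSolution C a (fun j t => ∫ r in 0..t, a j r) f x := by
  have haint := fun j => intervalIntegrable_of_continuousAt_off hC (ha j) (hbd j)
  exact
    { countable := hC
      continuousOn := hxc
      hasDerivAt := hxd
      continuousOn_primitive := fun j => (lipschitzOnWith_primitive (haint j) (hbd j)).continuousOn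
      hasDerivAt_primitive := fun t ht j =>
        integral_hasDerivAt_of_continuousAt_off hC (ha j) (haint j) ht
      intervalIntegrable := fun p q hp hq => intervalIntegrable_of_norm_le
        (aestronglyMeasurable_of_continuousAt_off hC hf) hp hq
        (((hxc.mono fun r hr => (le_min hp hq).trans hr.1).norm.intervalIntegrable).const_mul L)
        hfL }

namespace IsDiagonalSolution

variable {d : ℕ} {C : Set ℝ} {a φ : Fin d → ℝ → ℝ} {f x : ℝ → EuclideanSpace ℝ (Fin d)}
  {L s t : ℝ}

lemma exp_sub_mul_apply_eq (hx : IsDiagonalSolution C a φ f x) (hs : 0 ≤ s) (hst : s ≤ t)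
    (b : ℝ) (j : Fin d) :
    exp (φ j b - φ j t) * x t j
      = exp (φ j b - φ j s) * x s j + ∫ r in s..t, exp (φ j b - φ j r) * f r j := by
  have hsub : Icc s t ⊆ Ici 0 := fun r hr => hs.trans hr.1
  have hreg : Ioo s t \ C ⊆ Ioi 0 \ C := fun r hr => ⟨hs.trans_lt hr.1.1, hr.2⟩
  have key := exp_neg_mul_sub_eq_integral (y := fun r => x r j) (g := fun r => f r j)
    hx.countable hst
    ((EuclideanSpace.proj (𝕜 := ℝ) j).continuous.comp_continuousOn (hx.continuousOn.mono hsub))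
    ((hx.continuousOn_primitive j).mono hsub)
    (intervalIntegrable_iff.2 ((EuclideanSpace.proj (𝕜 := ℝ) j).integrable_comp
      (intervalIntegrable_iff.1 (hx.intervalIntegrable s t hs (hs.trans hst)))))
    (fun r hr => hx.hasDerivAt_primitive r (hreg hr) j) fun r hr =>
      (EuclideanSpace.proj (𝕜 := ℝ) j).hasFDerivAt.comp_hasDerivAt r (hx.hasDerivAt r (hreg hr))
  have hexp : ∀ r, exp (φ j b - φ j r) = exp (φ j b) * exp (-φ j r) := fun r => by
    rw [← exp_add, sub_eq_add_neg]
  simp only [hexp, intervalIntegral.integral_const_mul, mul_assoc]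
  rw [← key]
  ring

lemma norm_mul_exp_neg_le (hx : IsDiagonalSolution C a φ f x) (hf : ∀ t > 0, ‖f t‖ ≤ L * ‖x t‖)
    {ψ : ℝ → ℝ} (hψ : ContinuousOn ψ (Ici 0)) {c : ℝ}
    (hker : ∀ j r t, 0 ≤ r → r ≤ t → φ j t - φ j r ≤ ψ t - ψ r + c) (hs : 0 ≤ s) (hst : s ≤ t) :
    ‖x t‖ * exp (-ψ t)
      ≤ exp c * (‖x s‖ * exp (-ψ s)) + exp c * L * ∫ r in s..t, ‖x r‖ * exp (-ψ r) := by
  have hsub : Icc s t ⊆ Ici 0 := fun r hr => hs.trans hr.1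
  have hexp : ∀ r, 0 ≤ r → r ≤ t → ∀ j, |exp (φ j t - φ j r)| ≤ exp (c + ψ t - ψ r) :=
    fun r hr hrt j => by
      rw [abs_of_pos (exp_pos _), exp_le_exp]; linarith [hker j r t hr hrt]
  have hbound := norm_le_of_apply_eq_mul_add_integral (v := x t) (w := x s) (G := f)
    (k := fun j r => exp (φ j t - φ j r)) (κ := fun r => exp (c + ψ t - ψ r))
    (ρ := fun r => L * ‖x r‖) hst (exp_pos _).le (hx.intervalIntegrable s t hs (hs.trans hst))
    (fun j => (continuousOn_const.sub ((hx.continuousOn_primitive j).mono hsub)).rexp)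
    (continuousOn_const.sub (hψ.mono hsub)).rexp
    (continuousOn_const.mul (hx.continuousOn.mono hsub).norm) (fun r _ => (exp_pos _).le)
    (fun j => by simpa using hx.exp_sub_mul_apply_eq hs hst t j) (hexp s hs hst)
    (fun j r hr => hexp r (hs.trans hr.1) hr.2 j)
    (fun r hr => hf r (hs.trans_lt hr.1))
  have hint : ∫ r in s..t, exp (c + ψ t - ψ r) * (L * ‖x r‖)
      = exp (ψ t) * (exp c * L * ∫ r in s..t, ‖x r‖ * exp (-ψ r)) := by
    rw [← intervalIntegral.integral_const_mul, ← intervalIntegral.integral_const_mul]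
    refine intervalIntegral.integral_congr fun r _ => ?_
    simp only [sub_eq_add_neg, exp_add]
    ring
  rw [hint, show exp (c + ψ t - ψ s) * ‖x s‖ = exp (ψ t) * (exp c * (‖x s‖ * exp (-ψ s))) by
    simp only [sub_eq_add_neg, exp_add]; ring, ← mul_add] at hbound
  rwa [exp_neg, ← div_eq_mul_inv, div_le_iff₀' (exp_pos _)]

lemma norm_mul_exp_le (hx : IsDiagonalSolution C a φ f x) (hf : ∀ t > 0, ‖f t‖ ≤ L * ‖x t‖)
    {α : ℝ≥0} (hφ : ∀ j, LipschitzOnWith α (φ j) (Ici 0)) (hs : 0 ≤ s) (hst : s ≤ t) :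
    ‖x s‖ * exp (α * s) ≤ ‖x t‖ * exp (α * t) + L * ∫ r in s..t, ‖x r‖ * exp (α * r) := by
  have hsub : Icc s t ⊆ Ici 0 := fun r hr => hs.trans hr.1
  have hexp : ∀ r, s ≤ r → ∀ j, |exp (φ j s - φ j r)| ≤ exp (α * (r - s)) := fun r hr j => by
    have := (hφ j).dist_le_mul s hs r (hs.trans hr)
    rw [Real.dist_eq, Real.dist_eq, abs_sub_comm s, abs_of_nonneg (sub_nonneg.2 hr)] at this
    rw [abs_of_pos (exp_pos _), exp_le_exp]
    exact (le_abs_self _).trans this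
  have hv : ∀ j, x s j = exp (φ j s - φ j t) * x t j + ∫ r in s..t, exp (φ j s - φ j r) * -f r j :=
    fun j => by
      have := hx.exp_sub_mul_apply_eq hs hst s j
      simp only [sub_self, exp_zero, one_mul] at this
      simp only [mul_neg, intervalIntegral.integral_neg]
      linarith
  have hbound := norm_le_of_apply_eq_mul_add_integral (G := fun r => -f r)
    (κ := fun r => exp (α * (r - s))) (ρ := fun r => L * ‖x r‖) hst (exp_pos _).le
    (hx.intervalIntegrable s t hs (hs.trans hst)).neg
    (fun j => (continuousOn_const.sub ((hx.continuousOn_primitive j).mono hsub)).rexp)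
    (by fun_prop) (continuousOn_const.mul (hx.continuousOn.mono hsub).norm)
    (fun r _ => (exp_pos _).le) hv (hexp t hst) (fun j r hr => hexp r hr.1 j)
    (fun r hr => by simpa using hf r (hs.trans_lt hr.1))
  have hint : ∫ r in s..t, exp (α * (r - s)) * (L * ‖x r‖)
      = exp (-(α * s)) * (L * ∫ r in s..t, ‖x r‖ * exp (α * r)) := by
    rw [← intervalIntegral.integral_const_mul, ← intervalIntegral.integral_const_mul]
    refine intervalIntegral.integral_congr fun r _ => ?_
    rw [show (α : ℝ) * (r - s) = -(α * s) + α * r by ring, exp_add]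
    ring
  rw [hint, show exp (α * (t - s)) * ‖x t‖ = exp (-(α * s)) * (‖x t‖ * exp (α * t)) by
    rw [show (α : ℝ) * (t - s) = -(α * s) + α * t by ring, exp_add]; ring, ← mul_add, exp_neg,
    inv_mul_eq_div] at hbound
  rwa [← le_div_iff₀ (exp_pos _)]

lemma norm_le_exp_mul_exp (hx : IsDiagonalSolution C a φ f x) (hL : 0 ≤ L)
    (hf : ∀ t > 0, ‖f t‖ ≤ L * ‖x t‖) {ψ : ℝ → ℝ} (hψ : ContinuousOn ψ (Ici 0)) (hψ0 : ψ 0 = 0)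
    {c : ℝ} (hker : ∀ j r t, 0 ≤ r → r ≤ t → φ j t - φ j r ≤ ψ t - ψ r + c) (ht : 0 ≤ t) :
    ‖x t‖ ≤ exp c * ‖x 0‖ * exp (exp c * L * t + ψ t) := by
  have := le_mul_exp_of_le_add_mul_integral (v := fun r => ‖x r‖ * exp (-ψ r))
    (by positivity) ht ((hx.continuousOn.norm.mul hψ.neg.rexp).mono Icc_subset_Ici_self)
    fun r hr => hx.norm_mul_exp_neg_le hf hψ hker le_rfl hr.1
  simp only [hψ0, neg_zero, exp_zero, mul_one, sub_zero] at this
  rwa [exp_add, ← mul_assoc, ← div_le_iff₀ (exp_pos _), div_eq_mul_inv, ← exp_neg]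

lemma norm_le_norm_mul_exp (hx : IsDiagonalSolution C a φ f x) (hL : 0 ≤ L)
    (hf : ∀ t > 0, ‖f t‖ ≤ L * ‖x t‖) {α : ℝ≥0} (hφ : ∀ j, LipschitzOnWith α (φ j) (Ici 0))
    (ht : 0 ≤ t) : ‖x 0‖ ≤ ‖x t‖ * exp ((α + L) * t) := by
  have := le_mul_exp_of_le_add_mul_integral_rev (v := fun r => ‖x r‖ * exp (α * r)) hL ht
    ((hx.continuousOn.norm.mul (by fun_prop)).mono Icc_subset_Ici_self)
    fun r hr => hx.norm_mul_exp_le hf hφ hr.1 hr.2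
  simpa [add_mul, exp_add, mul_assoc] using this

end IsDiagonalSolution

noncomputable def blockwise {ι : Type*} (a : ι → ℝ → ℝ) (e : ℕ → ℝ) (J : ℕ → ι) (t : ℝ) : ℝ :=
  a (J (blockIndex e t)) t

section blockwise

variable {ι : Type*} {a : ι → ℝ → ℝ} {e : ℕ → ℝ} {J : ℕ → ι}

lemma integral_blockwise (he : StrictMono e) (htop : Tendsto e atTop atTop) (k : ℕ) :
    ∫ t in e k..e (k + 1), blockwise a e J t = ∫ t in e k..e (k + 1), a (J k) t := by
  refine intervalIntegral.integral_congr_ae (ae_of_all _ fun t ht => ?_)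
  rw [uIoc_of_le (he.monotone k.le_succ)] at ht
  simp only [blockwise, blockIndex_eq_of_mem_Ioc he htop ht]

lemma continuousAt_blockwise (he : StrictMono e) (htop : Tendsto e atTop atTop) {t : ℝ}
    (ht : e 0 < t) (hte : t ∉ range e) (ha : ContinuousAt (a (J (blockIndex e t))) t) :
    ContinuousAt (blockwise a e J) t := by
  refine ha.congr (eventually_of_mem (Ioo_blockIndex_mem_nhds htop ht hte) fun r hr => ?_)
  simp only [blockwise, blockIndex_eq_of_mem_Ioc he htop (Ioo_subset_Ioc_self hr)]

end blockwise

lemma exists_liao_weight {ι : Type*} [Fintype ι] [Nonempty ι] {a : ι → ℝ → ℝ} {e : ℕ → ℝ}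
    {C : Set ℝ} {α : ℝ≥0} {γ h : ℝ} (he : StrictMono e) (he0 : e 0 = 0)
    (htop : Tendsto e atTop atTop) (hgap : ∀ k, e (k + 1) - e k ≤ h) (hC : C.Countable)
    (heC : range e ⊆ C) (hcont : ∀ i, ∀ t ∈ Ioi 0 \ C, ContinuousAt (a i) t)
    (hbd : ∀ i, ∀ t > 0, |a i t| ≤ α) (hosc : ∀ i i', ∀ t > 0, a i t - a i' t ≤ γ) :
    ∃ ψ : ℝ → ℝ, LipschitzOnWith α ψ (Ici 0)
      ∧ (∀ s, ψ (e s) = ∑ k ∈ Finset.range s, ⨆ i, ∫ t in e k..e (k + 1), a i t)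
      ∧ ∀ i r t, 0 ≤ r → r ≤ t →
        (∫ u in 0..t, a i u) - ∫ u in 0..r, a i u ≤ ψ t - ψ r + 2 * (γ * h) := by
  choose J hJ using fun k => exists_eq_ciSup_of_finite (f := fun i => ∫ t in e k..e (k + 1), a i t)
  set P := blockwise a e J
  have hPcont : ∀ t ∈ Ioi 0 \ C, ContinuousAt P t := fun t ht =>
    continuousAt_blockwise he htop (he0 ▸ ht.1) (fun h => ht.2 (heC h)) (hcont _ t ht)
  have hPint := intervalIntegrable_of_continuousAt_off hC hPcont fun t ht => hbd _ t ht
  have haint := fun i => intervalIntegrable_of_continuousAt_off hC (hcont i) (hbd i)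
  refine ⟨fun t => ∫ u in 0..t, P u, lipschitzOnWith_primitive hPint fun t ht => hbd _ t ht,
    fun s => ?_, fun i r t hr hrt => ?_⟩
  · show ∫ u in 0..e s, P u = _
    rw [← he0, ← intervalIntegral.sum_integral_adjacent_intervals fun k _ =>
      hPint _ _ (he0 ▸ he.monotone k.zero_le) (he0 ▸ he.monotone (k + 1).zero_le)]
    exact Finset.sum_congr rfl fun k _ => (integral_blockwise he htop k).trans (hJ k)
  · set D : ℝ → ℝ := fun t => (∫ u in 0..t, a i u) - ∫ u in 0..t, P u
    have hDsub : ∀ p q, 0 ≤ p → 0 ≤ q → D q - D p = (∫ u in p..q, a i u) - ∫ u in p..q, P u :=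
      fun p q hp hq => by
        rw [← intervalIntegral.integral_interval_sub_left (haint i 0 q le_rfl hq)
          (haint i 0 p le_rfl hp), ← intervalIntegral.integral_interval_sub_left
          (hPint 0 q le_rfl hq) (hPint 0 p le_rfl hp)]
        ring
    have he_nn : ∀ k, 0 ≤ e k := fun k => he0 ▸ he.monotone k.zero_le
    have hDe : ∀ k, D (e (k + 1)) ≤ D (e k) := fun k => by
      have := hDsub (e k) (e (k + 1)) (he_nn k) (he_nn (k + 1))
      rw [integral_blockwise he htop k, hJ k] at this
      linarith [le_ciSup (Finite.bddAbove_range fun i => ∫ t in e k..e (k + 1), a i t) i]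
    have hD : ∀ p q, e 0 ≤ p → p ≤ q → D q - D p ≤ γ * (q - p) := fun p q hp hpq => by
      rw [he0] at hp
      rw [hDsub p q hp (hp.trans hpq), ← intervalIntegral.integral_sub (haint i p q hp
        (hp.trans hpq)) (hPint p q hp (hp.trans hpq)), mul_comm, ← smul_eq_mul,
        ← intervalIntegral.integral_const]
      exact intervalIntegral.integral_mono_on_of_le_Ioo hpq
        ((haint i p q hp (hp.trans hpq)).sub (hPint p q hp (hp.trans hpq)))
        intervalIntegrable_const fun u hu => hosc _ _ u (hp.trans_lt hu.1)
    have hγ : 0 ≤ γ := by simpa using hosc (Classical.arbitrary ι) (Classical.arbitrary ι) 1 one_pos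
    have := sub_le_of_antitone_on_grid he.monotone hγ hgap hDe hD
      (mem_Icc_blockIndex htop (he0 ▸ hr)) (mem_Icc_blockIndex htop (he0 ▸ hr.trans hrt)) hrt
    simp only [D] at this
    linarith

lemma eventually_le_mul_of_limsup_lt {ψ : ℝ → ℝ} {e : ℕ → ℝ} {α : ℝ≥0} {h c : ℝ}
    (he : StrictMono e) (he0 : e 0 = 0) (htop : Tendsto e atTop atTop)
    (hgap : ∀ k, e (k + 1) - e k ≤ h) (hψ : LipschitzOnWith α ψ (Ici 0)) (hψ0 : ψ 0 = 0)
    (hc : limsup (fun s => (e s)⁻¹ * ψ (e s)) atTop < c) : ∀ᶠ t in atTop, ψ t ≤ c * t := by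
  obtain ⟨c', hc', hc'c⟩ := exists_between hc
  have he_pos : ∀ s ≥ 1, 0 < e s := fun s hs => he0 ▸ he hs
  have hψle : ∀ p q, 0 ≤ p → p ≤ q → ψ q ≤ ψ p + α * (q - p) := fun p q hp hpq => by
    have := (hψ.dist_le_mul q (hp.trans hpq) p hp)
    rw [Real.dist_eq, Real.dist_eq, abs_of_nonneg (sub_nonneg.2 hpq)] at this
    linarith [le_abs_self (ψ q - ψ p)]
  have hbdd : IsBoundedUnder (· ≤ ·) atTop fun s => (e s)⁻¹ * ψ (e s) :=
    isBoundedUnder_of_eventually_le (a := α) <| eventually_atTop.2 ⟨1, fun s hs => by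
      rw [inv_mul_le_iff₀ (he_pos s hs)]
      simpa [hψ0, he0, mul_comm] using hψle 0 (e s) le_rfl (he0 ▸ he.monotone s.zero_le)⟩
  have hblock : ∀ᶠ s in atTop, ψ (e s) ≤ c' * e s :=
    (eventually_lt_of_limsup_lt hc' hbdd).and (eventually_ge_atTop 1) |>.mono fun s ⟨hs, hs1⟩ =>
      mul_comm c' (e s) ▸ ((inv_mul_lt_iff₀ (he_pos s hs1)).1 hs).le
  filter_upwards [tendsto_blockIndex he htop |>.eventually hblock, eventually_ge_atTop 0,
    tendsto_id.const_mul_atTop (sub_pos.2 hc'c) |>.eventually_ge_atTop ((|c'| + α) * h)]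
    with t hψt ht hlarge
  set b := blockIndex e t
  have hb := mem_Icc_blockIndex htop (he0 ▸ ht)
  have hgap' : t - e b ≤ h := by linarith [hgap b, hb.2]
  have hc'b : c' * (e b - t) ≤ |c'| * h := (le_abs_self _).trans <| by
    rw [abs_mul, abs_sub_comm, abs_of_nonneg (sub_nonneg.2 hb.1)]
    exact mul_le_mul_of_nonneg_left hgap' (abs_nonneg _)
  have := hψle (e b) t (he0 ▸ he.monotone b.zero_le) hb.1
  rw [id] at hlarge
  nlinarith [mul_le_mul_of_nonneg_left hgap' α.coe_nonneg]

lemma IsDiagonalSolution.eventually_norm_le_exp {d : ℕ} [NeZero d] {C : Set ℝ}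
    {a : Fin d → ℝ → ℝ} {f x : ℝ → EuclideanSpace ℝ (Fin d)} {e : ℕ → ℝ} {α : ℝ≥0} {L γ h χ : ℝ}
    (hx : IsDiagonalSolution C a (fun j t => ∫ r in 0..t, a j r) f x) (hL : 0 ≤ L)
    (hf : ∀ t > 0, ‖f t‖ ≤ L * ‖x t‖) (he : StrictMono e) (he0 : e 0 = 0)
    (htop : Tendsto e atTop atTop) (hgap : ∀ k, e (k + 1) - e k ≤ h) (heC : range e ⊆ C)
    (hcont : ∀ j, ∀ t ∈ Ioi 0 \ C, ContinuousAt (a j) t) (hbd : ∀ j, ∀ t > 0, |a j t| ≤ α)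
    (hosc : ∀ j j', ∀ t > 0, a j t - a j' t ≤ γ)
    (hχ : χ = limsup (fun s => (e s)⁻¹ * ∑ k ∈ Finset.range s,
      ⨆ j, ∫ t in e k..e (k + 1), a j t) atTop) :
    ∀ c > χ + L * exp (2 * (γ * h)), ∀ᶠ t in atTop, ‖x t‖ ≤ exp (c * t) := by
  obtain ⟨ψ, hψ, hψe, hker⟩ := exists_liao_weight he he0 htop hgap hx.countable heC hcont hbd hosc
  have hψ0 : ψ 0 = 0 := by simpa [he0] using hψe 0
  intro c hc
  set K := exp (2 * (γ * h))
  obtain ⟨c', hχc', hc'⟩ : ∃ c', χ < c' ∧ K * L + c' < c :=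
    ⟨(χ + c - K * L) / 2, by linarith, by linarith⟩
  have hψt := eventually_le_mul_of_limsup_lt he he0 htop hgap hψ hψ0
    (c := c') (by simp_rw [hψe]; rwa [← hχ])
  have hK := (tendsto_exp_atTop.comp (tendsto_id.const_mul_atTop (sub_pos.2 hc'))).eventually_ge_atTop
      (K * ‖x 0‖)
  filter_upwards [hψt, hK, eventually_ge_atTop 0] with t hψt hKt ht
  calc ‖x t‖ ≤ K * ‖x 0‖ * exp (K * L * t + ψ t) :=
        hx.norm_le_exp_mul_exp hL hf hψ.continuousOn hψ0 hker ht
    _ ≤ exp ((c - (K * L + c')) * t) * exp (K * L * t + c' * t) := by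
        gcongr
        exact hKt
    _ = exp (c * t) := by rw [← exp_add]; ring_nf

lemma limsup_log_norm_div_le {E : Type*} [NormedAddCommGroup E] {x : ℝ → E} {b m : ℝ}
    (hx0 : x 0 ≠ 0) (hlow : ∀ t ≥ 0, ‖x 0‖ ≤ ‖x t‖ * exp (m * t))
    (hup : ∀ c > b, ∀ᶠ t in atTop, ‖x t‖ ≤ exp (c * t)) :
    limsup (fun t => log ‖x t‖ / t) atTop ≤ b := by
  have hpos : ∀ t ≥ 0, 0 < ‖x t‖ := fun t ht => by
    by_contra! h
    have := (hlow t ht).trans (by rw [norm_le_zero_iff.1 h, norm_zero, zero_mul])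
    exact hx0 (norm_le_zero_iff.1 this)
  have hlog : ∀ t ≥ 0, log ‖x 0‖ ≤ log ‖x t‖ + m * t := fun t ht => by
    rw [← log_exp (m * t), ← log_mul (hpos t ht).ne' (exp_pos _).ne']
    exact log_le_log (norm_pos_iff.2 hx0) (hlow t ht)
  -- Unbounded below, the `limsup` in `ℝ` would be the junk value `0`.
  have hcobdd : IsCoboundedUnder (· ≤ ·) atTop fun t => log ‖x t‖ / t :=
    isCoboundedUnder_le_of_eventually_le (x := -|log ‖x 0‖| - m) atTop <|
      eventually_ge_atTop 1 |>.mono fun t ht => by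
        rw [le_div_iff₀ (by linarith)]
        nlinarith [hlog t (by linarith), neg_abs_le (log ‖x 0‖), abs_nonneg (log ‖x 0‖)]
  refine le_of_forall_gt_imp_ge_of_dense fun c hc => limsup_le_of_le hcobdd ?_
  filter_upwards [hup c hc, eventually_gt_atTop 0] with t hxt ht
  rw [div_le_iff₀ ht, ← log_exp (c * t)]
  exact log_le_log (hpos t ht.le) hxt

lemma continuousAt_switched {I X : Type*} [TopologicalSpace X] {τ : ℕ → ℝ} {σ : ℕ → I}
    {u : ℝ → I} {g : I → ℝ → X} (hτ0 : τ 0 = 0) (hτtop : Tendsto τ atTop atTop)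
    (hu : ∀ n, ∀ t ∈ Ioc (τ n) (τ (n + 1)), u t = σ (n + 1)) {t : ℝ}
    (ht : t ∈ Ioi 0 \ range τ) (hg : ∀ i, ContinuousAt (g i) t) :
    ContinuousAt (fun r => g (u r) r) t := by
  have hmem := Ioo_blockIndex_mem_nhds hτtop (hτ0 ▸ ht.1) ht.2
  refine (hg (u t)).congr (eventually_of_mem hmem fun r hr => ?_)
  dsimp only
  rw [hu _ r (Ioo_subset_Ioc_self hr), hu _ t (Ioo_subset_Ioc_self (mem_of_mem_nhds hmem))]

lemma sub_le_csSup_sub_csInf {S : Set ℝ} {M x y : ℝ} (hS : ∀ r ∈ S, |r| ≤ M) (hx : x ∈ S)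
    (hy : y ∈ S) : x - y ≤ sSup S - sInf S :=
  sub_le_sub (le_csSup ⟨M, fun r hr => (le_abs_self r).trans (hS r hr)⟩ hx)
    (csInf_le ⟨-M, fun r hr => neg_le_of_abs_le (hS r hr)⟩ hy)

lemma mulVecE_eq_of_isDiag {d : ℕ} {M : Matrix (Fin d) (Fin d) ℝ} (hM : M.IsDiag)
    (v : EuclideanSpace ℝ (Fin d)) : mulVecE M v = WithLp.toLp 2 fun j => M j j * v j := by
  ext j
  rw [mulVecE, ← hM.diagonal_diag]
  simp [Matrix.mulVec_diagonal]

lemma abs_apply_le_of_norm_mulVecE_le {d : ℕ} {M : Matrix (Fin d) (Fin d) ℝ} (hM : M.IsDiag)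
    {α : ℝ} (hMα : ∀ v, ‖mulVecE M v‖ ≤ α * ‖v‖) (j : Fin d) : |M j j| ≤ α := by
  simpa [mulVecE_eq_of_isDiag hM] using
    (PiLp.norm_apply_le (mulVecE M (EuclideanSpace.single j 1)) j).trans (hMα _)
theorem stmt0_general
    {d : ℕ} (hd : 2 ≤ d) {I : Type*}
    (A : I → ℝ → Matrix (Fin d) (Fin d) ℝ)
    (F : I → ℝ → EuclideanSpace ℝ (Fin d) → EuclideanSpace ℝ (Fin d))
    (α L Tstar : ℝ) (hα : 0 < α) (hT : 0 < Tstar) (hL0 : 0 ≤ L)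
    (hAcont : ∀ i, ContinuousOn (A i) (Set.Ioi (0:ℝ)))
    (hAnorm : ∀ i, ∀ t > (0:ℝ), ∀ v : EuclideanSpace ℝ (Fin d),
      ‖mulVecE (A i t) v‖ ≤ α * ‖v‖)
    (hAdiag : ∀ i, ∀ t > (0:ℝ), (A i t).IsDiag)
    (hFcont : ∀ i, ContinuousOn (Function.uncurry (F i))
      ((Set.Ioi (0:ℝ)) ×ˢ (Set.univ : Set (EuclideanSpace ℝ (Fin d)))))
    (hFbd : ∀ i, ∀ t > (0:ℝ), ∀ v : EuclideanSpace ℝ (Fin d), ‖F i t v‖ ≤ L * ‖v‖)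
    (τ : ℕ → ℝ) (hτ0 : τ 0 = 0) (hτmono : StrictMono τ)
    (hτtop : Filter.Tendsto τ Filter.atTop Filter.atTop)
    (hτgap : ∀ n : ℕ, τ (n+1) - τ n ≤ Tstar)
    (σ : ℕ → I) (u : ℝ → I)
    (hu : ∀ n : ℕ, ∀ t ∈ Set.Ioc (τ n) (τ (n+1)), u t = σ (n+1))
    (Δ : ℕ)
    (nseq : ℕ → ℕ) (hn0 : nseq 0 = 0) (hnmono : StrictMono nseq)
    (hngap : ∀ s : ℕ, nseq (s+1) - nseq s ≤ Δ)
    (χ γ δ : ℝ)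
    (hχ : χ = Filter.limsup (fun s : ℕ =>
        (τ (nseq s))⁻¹ * ∑ k ∈ Finset.range s, ⨆ j : Fin d,
          ∫ t in (τ (nseq k))..(τ (nseq (k+1))), A (u t) t j j) Filter.atTop)
    (hχneg : χ < 0)
    (hγ : γ = sSup {r : ℝ | ∃ t > (0:ℝ), ∃ j : Fin d, A (u t) t j j = r}
            - sInf {r : ℝ | ∃ t > (0:ℝ), ∃ j : Fin d, A (u t) t j j = r})
    (hδ : δ = |χ| * Real.exp (-2 * γ * Δ * Tstar))
    (hLδ : L < δ)
    (x : ℝ → EuclideanSpace ℝ (Fin d)) (x₀ : EuclideanSpace ℝ (Fin d))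
    (hx0 : x 0 = x₀)
    (hxcont : ContinuousOn x (Set.Ici (0:ℝ)))
    (hxode : ∀ t > (0:ℝ), (∀ n : ℕ, t ≠ τ n) →
        HasDerivAt x (mulVecE (A (u t) t) (x t) + F (u t) t (x t)) t) :
    (x₀ ≠ 0 → Filter.limsup (fun t : ℝ => Real.log ‖x t‖ / t) Filter.atTop
        ≤ χ + (L / δ) * |χ|)
    ∧ (∀ c : ℝ, χ + (L / δ) * |χ| < c →
        ∀ᶠ t : ℝ in Filter.atTop, ‖x t‖ ≤ Real.exp (c * t))
    ∧ χ + (L / δ) * |χ| < 0 := by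
  have : NeZero d := ⟨by omega⟩
  lift α to ℝ≥0 using hα.le
  set a : Fin d → ℝ → ℝ := fun j t => A (u t) t j j
  have hbd : ∀ j, ∀ t > 0, |a j t| ≤ α := fun j t ht =>
    abs_apply_le_of_norm_mulVecE_le (hAdiag _ t ht) (hAnorm _ t ht) j
  have hacont : ∀ j, ∀ t ∈ Ioi 0 \ range τ, ContinuousAt (a j) t := fun j t ht =>
    continuousAt_switched hτ0 hτtop hu ht fun i => (continuous_id.matrix_elem j j).continuousAt.comp
      ((hAcont i).continuousAt (Ioi_mem_nhds ht.1))
  have hFL : ∀ t > 0, ‖F (u t) t (x t)‖ ≤ L * ‖x t‖ := fun t ht => hFbd _ t ht _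
  have hx : IsDiagonalSolution (range τ) a (fun j t => ∫ r in 0..t, a j r)
      (fun t => F (u t) t (x t)) x :=
    .of_continuousAt (countable_range τ) hxcont
      (fun t ht => mulVecE_eq_of_isDiag (hAdiag _ t ht.1) (x t) ▸
        hxode t ht.1 fun n h => ht.2 ⟨n, h.symm⟩) hacont hbd
      (fun t ht => continuousAt_switched hτ0 hτtop hu ht fun i =>
        ((hFcont i).continuousAt (prod_mem_nhds (Ioi_mem_nhds ht.1) univ_mem)).comp
          (f := fun r => (r, x r))
          (continuousAt_id.prodMk (hxcont.continuousAt (Ici_mem_nhds ht.1))))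
      hFL
  have hgap : ∀ s, τ (nseq (s + 1)) - τ (nseq s) ≤ Δ * Tstar := fun s =>
    (sub_le_mul_of_sub_succ_le hτgap (hnmono.monotone s.le_succ)).trans
      (mul_le_mul_of_nonneg_right (by exact_mod_cast hngap s) hT.le)
  have hosc : ∀ j j', ∀ t > 0, a j t - a j' t ≤ γ := fun j j' t ht => hγ ▸
    sub_le_csSup_sub_csInf (by rintro r ⟨t, ht, j, rfl⟩; exact hbd j t ht) ⟨t, ht, j, rfl⟩
      ⟨t, ht, j', rfl⟩
  have hup := hx.eventually_norm_le_exp hL0 hFL (hτmono.comp hnmono) (by simp [hn0, hτ0])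
    (hτtop.comp hnmono.tendsto_atTop) hgap (range_comp_subset_range _ _) hacont hbd hosc hχ
  have hK : -2 * γ * Δ * Tstar = -(2 * (γ * (Δ * Tstar))) := by ring
  rw [hδ, hK, exp_neg, ← div_eq_mul_inv, lt_div_iff₀ (exp_pos _), abs_of_neg hχneg] at hLδ
  have hB : χ + L / δ * |χ| = χ + L * exp (2 * (γ * (Δ * Tstar))) := by
    rw [hδ, hK, exp_neg, abs_of_neg hχneg]
    field_simp [hχneg.ne]
  rw [hB]
  refine ⟨fun hx₀ => limsup_log_norm_div_le (hx0 ▸ hx₀) (fun t ht =>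
    hx.norm_le_norm_mul_exp hL0 hFL (fun j => lipschitzOnWith_primitive
      (intervalIntegrable_of_continuousAt_off (countable_range τ) (hacont j) (hbd j)) (hbd j)) ht)
    hup, hup, by linarith⟩

/-- diagonal case of the stability theorem, with the explicit
perturbation threshold `δ = |χ| exp(−2γΔT*)` and the explicit Lyapunov-exponent
bound `χ + (L/δ)|χ| < 0`. -/
theorem stmt0
    {d : ℕ} (hd : 2 ≤ d) {I : Type*}
    (A : I → ℝ → Matrix (Fin d) (Fin d) ℝ)
    (F : I → ℝ → EuclideanSpace ℝ (Fin d) → EuclideanSpace ℝ (Fin d))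
    (α L Tstar : ℝ) (hα : 0 < α) (hT : 0 < Tstar) (hL0 : 0 ≤ L)
    (hAcont : ∀ i, ContinuousOn (A i) (Set.Ioi (0:ℝ)))
    (hAnorm : ∀ i, ∀ t > (0:ℝ), ∀ v : EuclideanSpace ℝ (Fin d),
      ‖mulVecE (A i t) v‖ ≤ α * ‖v‖)
    (hAdiag : ∀ i, ∀ t > (0:ℝ), (A i t).IsDiag)
    (hFcont : ∀ i, ContinuousOn (Function.uncurry (F i))
      ((Set.Ioi (0:ℝ)) ×ˢ (Set.univ : Set (EuclideanSpace ℝ (Fin d)))))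
    (hFbd : ∀ i, ∀ t > (0:ℝ), ∀ v : EuclideanSpace ℝ (Fin d), ‖F i t v‖ ≤ L * ‖v‖)
    (τ : ℕ → ℝ) (hτ0 : τ 0 = 0) (hτmono : StrictMono τ)
    (hτtop : Filter.Tendsto τ Filter.atTop Filter.atTop)
    (hτgap : ∀ n : ℕ, τ (n+1) - τ n ≤ Tstar)
    (σ : ℕ → I) (u : ℝ → I)
    (hu : ∀ n : ℕ, ∀ t ∈ Set.Ioc (τ n) (τ (n+1)), u t = σ (n+1))
    (Δ : ℕ) (hΔ : 0 < Δ)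
    (nseq : ℕ → ℕ) (hn0 : nseq 0 = 0) (hnmono : StrictMono nseq)
    (hngap : ∀ s : ℕ, nseq (s+1) - nseq s ≤ Δ)
    (χ γ δ : ℝ)
    (hχ : χ = Filter.limsup (fun s : ℕ =>
        (τ (nseq s))⁻¹ * ∑ k ∈ Finset.range s, ⨆ j : Fin d,
          ∫ t in (τ (nseq k))..(τ (nseq (k+1))), A (u t) t j j) Filter.atTop)
    (hχneg : χ < 0)
    (hγ : γ = sSup {r : ℝ | ∃ t > (0:ℝ), ∃ j : Fin d, A (u t) t j j = r}
            - sInf {r : ℝ | ∃ t > (0:ℝ), ∃ j : Fin d, A (u t) t j j = r})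
    (hδ : δ = |χ| * Real.exp (-2 * γ * Δ * Tstar))
    (hLδ : L < δ)
    (x : ℝ → EuclideanSpace ℝ (Fin d)) (x₀ : EuclideanSpace ℝ (Fin d))
    (hx0 : x 0 = x₀)
    (hxcont : ContinuousOn x (Set.Ici (0:ℝ)))
    (hxode : ∀ t > (0:ℝ), (∀ n : ℕ, t ≠ τ n) →
        HasDerivAt x (mulVecE (A (u t) t) (x t) + F (u t) t (x t)) t) :
    (x₀ ≠ 0 → Filter.limsup (fun t : ℝ => Real.log ‖x t‖ / t) Filter.atTop
        ≤ χ + (L / δ) * |χ|)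
    ∧ (∀ c : ℝ, χ + (L / δ) * |χ| < c →
        ∀ᶠ t : ℝ in Filter.atTop, ‖x t‖ ≤ Real.exp (c * t))
    ∧ χ + (L / δ) * |χ| < 0 :=
  stmt0_general hd A F α L Tstar hα hT hL0 hAcont hAnorm hAdiag hFcont hFbd τ hτ0 hτmono hτtop hτgap
    σ u hu Δ nseq hn0 hnmono hngap χ γ δ hχ hχneg hγ hδ hLδ x x₀ hx0 hxcont hxode
end

section
/- Let A_0 = diag(1, −2) and A_1 = diag(−2, 1) in ℝ^{2×2}, let τ_n = n, σ(n) = 0 for n odd and σ(n) = 1 for n even, and u(t) = σ(n) for n−1 < t ≤ n. Then with the Δ-sequence n_s = s (Δ = 1), the Liao-type exponent equals 1; that is, limsup_{s→∞} (1/s) Σ_{k=1}^s max_{j∈{1,2}} ∫_{k−1}^{k} A_{u(t)}^{jj} dt = 1 (each term max_j ∫_{k−1}^{k} A_{u(t)}^{jj} dt equals 1). Hence for this exponentially stable system the Liao-type exponent associated with n_s = s is positive, while the one associated with n_s = 2s equals the true maximal Lyapunov exponent −1/2: the choice of the Δ-sequence matters. -/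
/-!
On each interval `(n, n + 1]` the switching law is constant, so the integral of a diagonal entry
is the corresponding diagonal entry of `A₀` or `A₁`, and the larger of the two is always `1`.
Over a period `(2k, 2k + 2]` each diagonal entry integrates to `1 + (-2) = -1`. Both averages
are therefore constant for `s ≥ 1`.
-/

/-- `A₀ = diag(1, −2)`. -/
noncomputable def A0 : Matrix (Fin 2) (Fin 2) ℝ := Matrix.diagonal ![1, -2]

/-- `A₁ = diag(−2, 1)`. -/
noncomputable def A1 : Matrix (Fin 2) (Fin 2) ℝ := Matrix.diagonal ![-2, 1]

open MeasureTheory Filter Finset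

theorem ciSup_fin_two {α : Type*} [ConditionallyCompleteLinearOrder α] (f : Fin 2 → α) :
    ⨆ j, f j = max (f 0) (f 1) := by
  have hbdd : BddAbove (Set.range f) := (Set.finite_range f).bddAbove
  refine le_antisymm (ciSup_le fun j => ?_) (max_le (le_ciSup hbdd 0) (le_ciSup hbdd 1))
  fin_cases j
  exacts [le_max_left _ _, le_max_right _ _]

theorem intervalIntegral_eq_of_eqOn_Ioc {a b c : ℝ} {f : ℝ → ℝ} (hab : a ≤ b)
    (hf : Set.EqOn f (fun _ => c) (Set.Ioc a b)) : ∫ t in a..b, f t = (b - a) * c := by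
  rw [intervalIntegral.integral_congr_ae' (g := fun _ => c) (.of_forall fun t ht => hf ht)
    (.of_forall fun t ht => absurd ht.2 (not_le.2 (hab.trans_lt ht.1))),
    intervalIntegral.integral_const, smul_eq_mul]

theorem intervalIntegrable_of_eqOn_Ioc {a b c : ℝ} {f : ℝ → ℝ} (hab : a ≤ b)
    (hf : Set.EqOn f (fun _ => c) (Set.Ioc a b)) : IntervalIntegrable f volume a b :=
  intervalIntegrable_const.congr (by rw [Set.uIoc_of_le hab]; exact hf.symm)

theorem limsup_inv_mul_sum_range_eq {c a : ℝ} {f : ℕ → ℝ} (hf : ∀ k, f k = a) :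
    limsup (fun s : ℕ => (c * s)⁻¹ * ∑ k ∈ range s, f k) atTop = a / c := by
  refine (limsup_congr ?_).trans (limsup_const (a / c))
  filter_upwards [eventually_ne_atTop 0] with s hs
  simp only [hf, sum_const, card_range, nsmul_eq_mul]
  field_simp

theorem iSup_diag_A0 : ⨆ j, A0 j j = 1 := by
  rw [ciSup_fin_two]; norm_num [A0]

theorem iSup_diag_A1 : ⨆ j, A1 j j = 1 := by
  rw [ciSup_fin_two]; norm_num [A1]

theorem diag_A0_add_diag_A1 (j : Fin 2) : A0 j j + A1 j j = -1 := by
  fin_cases j <;> norm_num [A0, A1]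

section

variable {Au : ℝ → Matrix (Fin 2) (Fin 2) ℝ}
  (hAu : ∀ n : ℕ, ∀ t ∈ Set.Ioc ((n : ℝ)) ((n : ℝ) + 1),
    Au t = if n % 2 = 0 then A0 else A1)
include hAu

theorem integral_diag_unit (n : ℕ) (j : Fin 2) :
    ∫ t in (n : ℝ)..n + 1, Au t j j = (if n % 2 = 0 then A0 else A1) j j := by
  rw [intervalIntegral_eq_of_eqOn_Ioc (c := (if n % 2 = 0 then A0 else A1) j j) (by linarith)
    fun t ht => by simp only [hAu n t ht]]
  ring

theorem intervalIntegrable_diag_unit (n : ℕ) (j : Fin 2) :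
    IntervalIntegrable (fun t => Au t j j) volume n (n + 1) :=
  intervalIntegrable_of_eqOn_Ioc (c := (if n % 2 = 0 then A0 else A1) j j) (by linarith)
    fun t ht => by simp only [hAu n t ht]

theorem iSup_integral_diag_unit (n : ℕ) : ⨆ j, ∫ t in (n : ℝ)..n + 1, Au t j j = 1 := by
  simp only [integral_diag_unit hAu]
  split_ifs
  exacts [iSup_diag_A0, iSup_diag_A1]

theorem integral_diag_period (k : ℕ) (j : Fin 2) :
    ∫ t in 2 * (k : ℝ)..2 * k + 2, Au t j j = -1 := by
  have h0 := integral_diag_unit hAu (2 * k) j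
  have h1 := integral_diag_unit hAu (2 * k + 1) j
  have i0 := intervalIntegrable_diag_unit hAu (2 * k) j
  have i1 := intervalIntegrable_diag_unit hAu (2 * k + 1) j
  push_cast at h0 h1 i0 i1
  rw [show 2 * (k : ℝ) + 2 = 2 * k + 1 + 1 by ring,
    ← intervalIntegral.integral_add_adjacent_intervals i0 i1, h0, h1]
  simpa [Nat.add_mod] using diag_A0_add_diag_A1 j

end

/-- for the periodic switching law alternating `A₀, A₁` on unit
intervals, the Liao-type exponent associated with the Δ-sequence `n_s = s`
(`Δ = 1`, the Dai–Huang–Xiao exponent) equals `1`: each term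
`max_j ∫_{k−1}^{k} A_{u(t)}^{jj} dt` equals `1` and the limsup equals `1`,
whereas the Liao-type exponent associated with `n_s = 2s` equals `−1/2`. -/
theorem stmt13
    (Au : ℝ → Matrix (Fin 2) (Fin 2) ℝ)
    (hAu : ∀ n : ℕ, ∀ t ∈ Set.Ioc ((n : ℝ)) ((n : ℝ) + 1),
        Au t = if n % 2 = 0 then A0 else A1) :
    (∀ k : ℕ, (⨆ j : Fin 2, ∫ t in ((k : ℝ))..((k : ℝ) + 1), Au t j j) = 1)
    ∧ Filter.limsup (fun s : ℕ => ((s : ℝ))⁻¹ * ∑ k ∈ Finset.range s,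
        ⨆ j : Fin 2, ∫ t in ((k : ℝ))..((k : ℝ) + 1), Au t j j)
        Filter.atTop = 1
    ∧ Filter.limsup (fun s : ℕ => (2 * (s : ℝ))⁻¹ * ∑ k ∈ Finset.range s,
        ⨆ j : Fin 2, ∫ t in (2 * (k : ℝ))..(2 * (k : ℝ) + 2), Au t j j)
        Filter.atTop = -(1/2) := by
  have hunit := iSup_integral_diag_unit hAu
  have hperiod (k : ℕ) : ⨆ j : Fin 2, ∫ t in 2 * (k : ℝ)..2 * k + 2, Au t j j = -1 := by
    simp only [integral_diag_period hAu, ciSup_const]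
  refine ⟨hunit, ?_, ?_⟩
  · simpa using limsup_inv_mul_sum_range_eq (c := 1) hunit
  · rw [limsup_inv_mul_sum_range_eq hperiod]; norm_num
end

section
/- Let B_0(t) = [[1 + γ_0(t), α_0(t)], [β_0(t), −2 + η_0(t)]] and B_1(t) = [[−2 + γ_1(t), α_1(t)], [β_1(t), 1 + η_1(t)]], where γ_0, γ_1, η_0, η_1, α_0, α_1, β_0, β_1 : ℝ₊ → ℝ are piecewise continuous functions converging to 0 as t → ∞. Let τ_n = n, σ(n) = 0 for n odd and σ(n) = 1 for n even, and u(t) = σ(n) for n−1 < t ≤ n. Then every solution x of the time-varying switched system ẋ(t) = B_{u(t)}(t)x(t) satisfies limsup_{t→∞} (1/t)·log‖x(t)‖ < 0; i.e., the system is globally asymptotically exponentially stable under this periodic switching law. -/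
/-!
On `(n, n + 1)` the unperturbed system is diagonal, with rates `(1, -2)` for even `n` and
`(-2, 1)` for odd `n`. The continuous piecewise linear weights `psi₀`, `psi₁` have exactly these
slopes, so in the weighted energy `V = (e^{-ψ₀} x₀)² + (e^{-ψ₁} x₁)²` the unperturbed dynamics
cancels and only the perturbation remains: `V' ≤ K L(t) V` with `L(t) → 0`, where `K` depends
only on `sup |ψ₀ - ψ₁| = 3/2`. Hence `V` grows slower than any exponential, while
`ψᵢ(t) ≤ 3/2 - t/2` (the rates average to `-1/2`), so `‖x t‖² ≤ e^{3 - t} V t` decays exponentially.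
-/

open Real Set Filter Topology

lemma antitoneOn_of_hasDerivAt_nonpos_off_finite {f : ℝ → ℝ} {s : Set ℝ} (hs : s.Finite)
    {a b : ℝ} (hf : ContinuousOn f (Icc a b))
    (hf' : ∀ t ∈ Ioo a b \ s, ∃ v ≤ 0, HasDerivAt f v t) : AntitoneOn f (Icc a b) := by
  induction s, hs using Set.Finite.induction_on generalizing a b with
  | empty =>
    simp only [sdiff_empty] at hf'
    choose! f' hf'_nonpos hf'_deriv using hf'
    refine antitoneOn_of_deriv_nonpos (convex_Icc a b) hf ?_ ?_ <;> rw [interior_Icc]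
    · exact fun t ht => (hf'_deriv t ht).differentiableAt.differentiableWithinAt
    · exact fun t ht => (hf'_deriv t ht).deriv ▸ hf'_nonpos t ht
  | @insert e s _ _ ih =>
    have hf'_off : ∀ {a' b'}, Ioo a' b' ⊆ Ioo a b → e ∉ Ioo a' b' →
        ∀ t ∈ Ioo a' b' \ s, ∃ v ≤ 0, HasDerivAt f v t := fun hsub he t ht =>
      hf' t ⟨hsub ht.1, by rintro (rfl | h); exacts [he ht.1, ht.2 h]⟩
    by_cases he : e ∈ Ioo a b
    · rw [← Icc_union_Icc_eq_Icc he.1.le he.2.le]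
      refine AntitoneOn.union_right (ih (hf.mono (Icc_subset_Icc_right he.2.le)) ?_)
        (ih (hf.mono (Icc_subset_Icc_left he.1.le)) ?_)
        (isGreatest_Icc he.1.le) (isLeast_Icc he.2.le)
      · exact hf'_off (Ioo_subset_Ioo_right he.2.le) (fun h => lt_irrefl e h.2)
      · exact hf'_off (Ioo_subset_Ioo_left he.1.le) (fun h => lt_irrefl e h.1)
    · exact ih hf (hf'_off subset_rfl he)

lemma le_mul_exp_of_hasDerivAt_le_mul_off_finite {V : ℝ → ℝ} {s : Set ℝ} (hs : s.Finite)
    {K a b : ℝ} (hab : a ≤ b) (hV : ContinuousOn V (Icc a b))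
    (hV' : ∀ t ∈ Ioo a b \ s, ∃ v, HasDerivAt V v t ∧ v ≤ K * V t) :
    V b ≤ V a * exp (K * (b - a)) := by
  set G : ℝ → ℝ := fun t => V t * exp (-(K * t))
  have hG : AntitoneOn G (Icc a b) := by
    refine antitoneOn_of_hasDerivAt_nonpos_off_finite hs (by fun_prop) fun t ht => ?_
    obtain ⟨v, hv, hvK⟩ := hV' t ht
    have hexp : HasDerivAt (fun t => exp (-(K * t))) (exp (-(K * t)) * -K) t := by
      simpa using ((hasDerivAt_id t).const_mul K).neg.exp
    refine ⟨_, ?_, hv.mul hexp⟩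
    linarith [mul_le_mul_of_nonneg_right hvK (exp_pos (-(K * t))).le]
  have hGab := hG (left_mem_Icc.2 hab) (right_mem_Icc.2 hab) hab
  calc V b = G b * exp (K * b) := by simp only [G, mul_assoc, ← exp_add]; simp
    _ ≤ G a * exp (K * b) := mul_le_mul_of_nonneg_right hGab (exp_pos _).le
    _ = V a * exp (K * (b - a)) := by simp only [G, mul_assoc, ← exp_add]; ring_nf

lemma finite_range_inter_Iic_of_tendsto_atTop {f : ℕ → ℝ} (hf : Tendsto f atTop atTop) (b : ℝ) :
    (range f ∩ Iic b).Finite := by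
  have hfin : {k | ¬ b < f k}.Finite := by
    rw [← eventually_cofinite, Nat.cofinite_eq_atTop]
    exact hf.eventually_gt_atTop b
  refine (hfin.image f).subset ?_
  rintro _ ⟨⟨k, rfl⟩, hk⟩
  exact ⟨k, not_lt.2 hk, rfl⟩

lemma eventually_le_mul_exp_of_hasDerivAt_le {V k : ℝ → ℝ} {s : Set ℝ}
    (hs : ∀ b, (s ∩ Iic b).Finite) (hV : ContinuousOn V (Ici 0)) (hV₀ : ∀ t, 0 ≤ V t)
    (hk : Tendsto k atTop (𝓝 0)) (hV' : ∀ t, 0 < t → t ∉ s → ∃ v, HasDerivAt V v t ∧ v ≤ k t * V t)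
    {ε : ℝ} (hε : 0 < ε) : ∃ C, ∀ᶠ t in atTop, V t ≤ C * exp (ε * t) := by
  obtain ⟨T, hT⟩ := eventually_atTop.1 ((eventually_gt_atTop 0).and (hk.eventually_lt_const hε))
  refine ⟨V T * exp (-(ε * T)), eventually_atTop.2 ⟨T, fun t ht => ?_⟩⟩
  have hgrowth : V t ≤ V T * exp (ε * (t - T)) := by
    refine le_mul_exp_of_hasDerivAt_le_mul_off_finite (hs t) ht
      (hV.mono fun s hs => (hT T le_rfl).1.le.trans hs.1) fun s hs => ?_
    obtain ⟨v, hv, hvk⟩ := hV' s (hT s hs.1.1.le).1 fun h => hs.2 ⟨h, hs.1.2.le⟩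
    exact ⟨v, hv, hvk.trans (mul_le_mul_of_nonneg_right (hT s hs.1.1.le).2.le (hV₀ s))⟩
  calc V t ≤ V T * exp (ε * (t - T)) := hgrowth
    _ = V T * exp (-(ε * T)) * exp (ε * t) := by rw [mul_assoc, ← exp_add]; ring_nf

lemma exists_tendsto_zero_forall_abs_le {α : Type*} {l : Filter α} (fs : List (α → ℝ))
    (hfs : ∀ f ∈ fs, Tendsto f l (𝓝 0)) :
    ∃ L : α → ℝ, Tendsto L l (𝓝 0) ∧ ∀ f ∈ fs, ∀ t, |f t| ≤ L t :=
  ⟨fun t => (fs.map fun f => |f t|).sum,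
    by simpa using tendsto_list_sum _ fun f hf => (hfs f hf).abs,
    fun _ hf _ => List.single_le_sum (by simp) _ (List.mem_map_of_mem hf)⟩

lemma exists_neg_eventually_le_exp_of_sq_le {g : ℝ → ℝ} {C a : ℝ} (ha : 0 < a)
    (hg : ∀ᶠ t in atTop, g t ^ 2 ≤ C * exp (-(a * t))) :
    ∃ c < 0, ∀ᶠ t in atTop, g t ≤ exp (c * t) := by
  refine ⟨-(a / 4), by linarith, ?_⟩
  have hC : ∀ᶠ t in atTop, C ≤ exp (a / 2 * t) :=
    (tendsto_exp_atTop.comp (tendsto_id.const_mul_atTop (half_pos ha))).eventually_ge_atTop C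
  filter_upwards [hg, hC] with t hgt hCt
  refine (abs_le_of_sq_le_sq' ?_ (exp_pos _).le).2
  calc g t ^ 2 ≤ C * exp (-(a * t)) := hgt
    _ ≤ exp (a / 2 * t) * exp (-(a * t)) := mul_le_mul_of_nonneg_right hCt (exp_pos _).le
    _ = exp (-(a / 4) * t) ^ 2 := by rw [← exp_add, ← exp_nat_mul]; ring_nf

lemma quadratic_form_le {γ α β η p q L M y₀ y₁ : ℝ} (hγ : |γ| ≤ L) (hα : |α| ≤ L) (hβ : |β| ≤ L)
    (hη : |η| ≤ L) (hp : 0 ≤ p) (hpM : p ≤ M) (hq : 0 ≤ q) (hqM : q ≤ M) :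
    γ * y₀ ^ 2 + (α * p + β * q) * (y₀ * y₁) + η * y₁ ^ 2 ≤ (1 + M) * L * (y₀ ^ 2 + y₁ ^ 2) := by
  have hL : 0 ≤ L := (abs_nonneg γ).trans hγ
  have hdiag₀ : γ * y₀ ^ 2 ≤ L * y₀ ^ 2 :=
    mul_le_mul_of_nonneg_right (le_of_abs_le hγ) (sq_nonneg _)
  have hdiag₁ : η * y₁ ^ 2 ≤ L * y₁ ^ 2 :=
    mul_le_mul_of_nonneg_right (le_of_abs_le hη) (sq_nonneg _)
  have hcoef : |α * p + β * q| ≤ 2 * (M * L) := by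
    calc |α * p + β * q| ≤ |α| * p + |β| * q := by
          simpa [abs_mul, abs_of_nonneg hp, abs_of_nonneg hq] using abs_add_le (α * p) (β * q)
      _ ≤ L * M + L * M := by gcongr
      _ = 2 * (M * L) := by ring
  have hcross : 2 * |y₀ * y₁| ≤ y₀ ^ 2 + y₁ ^ 2 := by
    simpa [abs_mul, mul_assoc] using two_mul_le_add_sq |y₀| |y₁|
  have hoff : (α * p + β * q) * (y₀ * y₁) ≤ M * L * (y₀ ^ 2 + y₁ ^ 2) :=
    calc (α * p + β * q) * (y₀ * y₁) ≤ |α * p + β * q| * |y₀ * y₁| := by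
          rw [← abs_mul]; exact le_abs_self _
      _ ≤ 2 * (M * L) * |y₀ * y₁| := by gcongr
      _ = M * L * (2 * |y₀ * y₁|) := by ring
      _ ≤ M * L * (y₀ ^ 2 + y₁ ^ 2) := by
          gcongr
          exact mul_nonneg (hp.trans hpM) hL
  linarith

noncomputable def weightedEnergy (ψ₀ ψ₁ x₀ x₁ : ℝ → ℝ) (t : ℝ) : ℝ :=
  (exp (-ψ₀ t) * x₀ t) ^ 2 + (exp (-ψ₁ t) * x₁ t) ^ 2

lemma weightedEnergy_nonneg (ψ₀ ψ₁ x₀ x₁ : ℝ → ℝ) (t : ℝ) : 0 ≤ weightedEnergy ψ₀ ψ₁ x₀ x₁ t := by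
  unfold weightedEnergy; positivity

lemma sq_add_sq_le_exp_mul_weightedEnergy {ψ₀ ψ₁ x₀ x₁ : ℝ → ℝ} {t m : ℝ} (h₀ : ψ₀ t ≤ m)
    (h₁ : ψ₁ t ≤ m) : x₀ t ^ 2 + x₁ t ^ 2 ≤ exp (2 * m) * weightedEnergy ψ₀ ψ₁ x₀ x₁ t := by
  have key : ∀ ψ y : ℝ, ψ ≤ m → y ^ 2 ≤ exp (2 * m) * (exp (-ψ) * y) ^ 2 := fun ψ y hψ => by
    calc y ^ 2 = exp (2 * ψ) * (exp (-ψ) * y) ^ 2 := by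
          rw [mul_pow, ← exp_nat_mul, ← mul_assoc, ← exp_add]; push_cast; ring_nf; simp
      _ ≤ exp (2 * m) * (exp (-ψ) * y) ^ 2 := by gcongr
  rw [weightedEnergy, mul_add]
  exact add_le_add (key _ _ h₀) (key _ _ h₁)

lemma exists_hasDerivAt_weightedEnergy_le {ψ₀ ψ₁ x₀ x₁ : ℝ → ℝ}
    {t d₀ d₁ m₀₀ m₀₁ m₁₀ m₁₁ L c : ℝ} (hψ₀ : HasDerivAt ψ₀ d₀ t) (hψ₁ : HasDerivAt ψ₁ d₁ t)
    (hx₀ : HasDerivAt x₀ (m₀₀ * x₀ t + m₀₁ * x₁ t) t)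
    (hx₁ : HasDerivAt x₁ (m₁₀ * x₀ t + m₁₁ * x₁ t) t)
    (h₀₀ : |m₀₀ - d₀| ≤ L) (h₀₁ : |m₀₁| ≤ L) (h₁₀ : |m₁₀| ≤ L) (h₁₁ : |m₁₁ - d₁| ≤ L)
    (hψ : |ψ₀ t - ψ₁ t| ≤ c) :
    ∃ v, HasDerivAt (weightedEnergy ψ₀ ψ₁ x₀ x₁) v t ∧
      v ≤ 2 * (1 + exp c) * L * weightedEnergy ψ₀ ψ₁ x₀ x₁ t := by
  have hy₀ : HasDerivAt (fun s => exp (-ψ₀ s) * x₀ s)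
      (exp (-ψ₀ t) * ((m₀₀ - d₀) * x₀ t + m₀₁ * x₁ t)) t :=
    (hψ₀.neg.exp.mul hx₀).congr_deriv (by simp only [Pi.neg_apply]; ring)
  have hy₁ : HasDerivAt (fun s => exp (-ψ₁ s) * x₁ s)
      (exp (-ψ₁ t) * (m₁₀ * x₀ t + (m₁₁ - d₁) * x₁ t)) t :=
    (hψ₁.neg.exp.mul hx₁).congr_deriv (by simp only [Pi.neg_apply]; ring)
  set E₀ := exp (-ψ₀ t)
  set E₁ := exp (-ψ₁ t)
  have hp : exp (ψ₁ t - ψ₀ t) = E₀ / E₁ := by rw [← exp_sub]; ring_nf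
  have hq : exp (ψ₀ t - ψ₁ t) = E₁ / E₀ := by rw [← exp_sub]; ring_nf
  have hE₀ : E₀ ≠ 0 := (exp_pos _).ne'
  have hE₁ : E₁ ≠ 0 := (exp_pos _).ne'
  refine ⟨2 * ((m₀₀ - d₀) * (E₀ * x₀ t) ^ 2
      + (m₀₁ * exp (ψ₁ t - ψ₀ t) + m₁₀ * exp (ψ₀ t - ψ₁ t)) * (E₀ * x₀ t * (E₁ * x₁ t))
      + (m₁₁ - d₁) * (E₁ * x₁ t) ^ 2), ((hy₀.pow 2).add (hy₁.pow 2)).congr_deriv ?_, ?_⟩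
  · rw [hp, hq]
    field_simp
    ring
  · rw [weightedEnergy]
    linarith [quadratic_form_le (y₀ := E₀ * x₀ t) (y₁ := E₁ * x₁ t) h₀₀ h₀₁ h₁₀ h₁₁
      (exp_pos _).le (exp_le_exp.2 ((le_abs_self _).trans (abs_sub_comm (ψ₀ t) _ ▸ hψ)))
      (exp_pos _).le (exp_le_exp.2 ((le_abs_self _).trans hψ))]

/-- The distance from `t` to the nearest even integer. -/
noncomputable def triangleWave (t : ℝ) : ℝ := arccos (cos (π * t)) / π

lemma triangleWave_nonneg (t : ℝ) : 0 ≤ triangleWave t :=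
  div_nonneg (arccos_nonneg _) pi_pos.le

lemma triangleWave_le_one (t : ℝ) : triangleWave t ≤ 1 :=
  (div_le_one pi_pos).2 (arccos_le_pi _)

@[fun_prop]
lemma continuous_triangleWave : Continuous triangleWave := by
  unfold triangleWave; fun_prop

lemma triangleWave_eq_of_mem_Icc_even (k : ℕ) {t : ℝ} (ht : t ∈ Icc (2 * k : ℝ) (2 * k + 1)) :
    triangleWave t = t - 2 * k := by
  have hcos : cos (π * t) = cos (π * (t - 2 * k)) := by
    rw [show π * t = π * (t - 2 * k) + (k : ℤ) * (2 * π) by push_cast; ring,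
      cos_add_int_mul_two_pi]
  rw [triangleWave, hcos, arccos_cos (by nlinarith [pi_pos, ht.1]) (by nlinarith [pi_pos, ht.2])]
  field_simp

lemma triangleWave_eq_of_mem_Icc_odd (k : ℕ) {t : ℝ}
    (ht : t ∈ Icc (2 * k + 1 : ℝ) (2 * k + 2)) : triangleWave t = 2 * k + 2 - t := by
  have hcos : cos (π * t) = cos (π * (2 * k + 2 - t)) := by
    rw [show π * (2 * k + 2 - t) = -(π * t) + ((k + 1 : ℤ) : ℝ) * (2 * π) by push_cast; ring,
      cos_add_int_mul_two_pi, cos_neg]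
  rw [triangleWave, hcos, arccos_cos (by nlinarith [pi_pos, ht.2]) (by nlinarith [pi_pos, ht.1])]
  field_simp

lemma hasDerivAt_triangleWave {n : ℕ} {t : ℝ} (ht : t ∈ Ioo (n : ℝ) (n + 1)) :
    HasDerivAt triangleWave (if n % 2 = 0 then 1 else -1) t := by
  have hnhds : Ioo (n : ℝ) (n + 1) ∈ 𝓝 t := Ioo_mem_nhds ht.1 ht.2
  rcases Nat.even_or_odd' n with ⟨k, rfl | rfl⟩
  · rw [if_pos (by omega)]
    refine ((hasDerivAt_id t).sub_const (2 * k : ℝ)).congr_of_eventuallyEq ?_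
    filter_upwards [hnhds] with s hs
    push_cast at hs
    exact triangleWave_eq_of_mem_Icc_even k ⟨hs.1.le, hs.2.le⟩
  · rw [if_neg (by omega)]
    refine ((hasDerivAt_id t).const_sub (2 * k + 2 : ℝ)).congr_of_eventuallyEq ?_
    filter_upwards [hnhds] with s hs
    push_cast at hs
    exact triangleWave_eq_of_mem_Icc_odd k ⟨hs.1.le, by linarith [hs.2]⟩

noncomputable def psi₀ (t : ℝ) : ℝ := 3 / 2 * triangleWave t - t / 2

noncomputable def psi₁ (t : ℝ) : ℝ := 3 / 2 * (1 - triangleWave t) - t / 2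

@[fun_prop]
lemma continuous_psi₀ : Continuous psi₀ := by
  unfold psi₀; fun_prop

@[fun_prop]
lemma continuous_psi₁ : Continuous psi₁ := by
  unfold psi₁; fun_prop

lemma psi₀_le (t : ℝ) : psi₀ t ≤ 3 / 2 - t / 2 := by
  unfold psi₀; linarith [triangleWave_le_one t]

lemma psi₁_le (t : ℝ) : psi₁ t ≤ 3 / 2 - t / 2 := by
  unfold psi₁; linarith [triangleWave_nonneg t]

lemma abs_psi₀_sub_psi₁_le (t : ℝ) : |psi₀ t - psi₁ t| ≤ 3 / 2 := by
  unfold psi₀ psi₁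
  rw [abs_le]
  constructor <;> linarith [triangleWave_nonneg t, triangleWave_le_one t]

lemma hasDerivAt_psi₀ {n : ℕ} {t : ℝ} (ht : t ∈ Ioo (n : ℝ) (n + 1)) :
    HasDerivAt psi₀ (if n % 2 = 0 then 1 else -2) t := by
  refine (((hasDerivAt_triangleWave ht).const_mul (3 / 2)).sub
    ((hasDerivAt_id t).div_const 2)).congr_deriv ?_
  split_ifs <;> norm_num

lemma hasDerivAt_psi₁ {n : ℕ} {t : ℝ} (ht : t ∈ Ioo (n : ℝ) (n + 1)) :
    HasDerivAt psi₁ (if n % 2 = 0 then -2 else 1) t := by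
  refine ((((hasDerivAt_triangleWave ht).const_sub 1).const_mul (3 / 2)).sub
    ((hasDerivAt_id t).div_const 2)).congr_deriv ?_
  split_ifs <;> norm_num

lemma hasDerivAt_coord_of_hasDerivAt_mulVecE {x : ℝ → EuclideanSpace ℝ (Fin 2)}
    {M : Matrix (Fin 2) (Fin 2) ℝ} {t : ℝ} (hx : HasDerivAt x (mulVecE M (x t)) t) (i : Fin 2) :
    HasDerivAt (fun s => x s i) (M i 0 * x t 0 + M i 1 * x t 1) t := by
  refine ((EuclideanSpace.proj i).hasFDerivAt.comp_hasDerivAt t hx).congr_deriv ?_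
  fin_cases i <;> simp [mulVecE, Matrix.mulVec_fin_two]

lemma abs_switched_entries_sub_le {g0 g1 e0 e1 a0 a1 b0 b1 L : ℝ → ℝ}
    {B : Fin 2 → ℝ → Matrix (Fin 2) (Fin 2) ℝ}
    (hB0 : ∀ t : ℝ, B 0 t = Matrix.of ![![1 + g0 t, a0 t], ![b0 t, -2 + e0 t]])
    (hB1 : ∀ t : ℝ, B 1 t = Matrix.of ![![-2 + g1 t, a1 t], ![b1 t, 1 + e1 t]])
    {u : ℝ → Fin 2} (hu : ∀ n : ℕ, ∀ t ∈ Ioc (n : ℝ) (n + 1), u t = if n % 2 = 0 then 0 else 1)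
    (hL : ∀ f ∈ [g0, g1, e0, e1, a0, a1, b0, b1], ∀ t, |f t| ≤ L t)
    {n : ℕ} {t : ℝ} (ht : t ∈ Ioo (n : ℝ) (n + 1)) :
    |B (u t) t 0 0 - (if n % 2 = 0 then 1 else -2)| ≤ L t ∧ |B (u t) t 0 1| ≤ L t ∧
      |B (u t) t 1 0| ≤ L t ∧ |B (u t) t 1 1 - (if n % 2 = 0 then -2 else 1)| ≤ L t := by
  rw [hu n t (Ioo_subset_Ioc_self ht)]
  split_ifs
  · simpa [hB0] using ⟨hL g0 (by simp) t, hL a0 (by simp) t, hL b0 (by simp) t, hL e0 (by simp) t⟩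
  · simpa [hB1] using ⟨hL g1 (by simp) t, hL a1 (by simp) t, hL b1 (by simp) t, hL e1 (by simp) t⟩

theorem stmt14_general
    (g0 g1 e0 e1 a0 a1 b0 b1 : ℝ → ℝ)
    (r : ℕ → ℝ)
    (hrtop : Filter.Tendsto r Filter.atTop Filter.atTop)
    (hlim : ∀ f ∈ ([g0, g1, e0, e1, a0, a1, b0, b1] : List (ℝ → ℝ)),
        Filter.Tendsto f Filter.atTop (nhds 0))
    (B : Fin 2 → ℝ → Matrix (Fin 2) (Fin 2) ℝ)
    (hB0 : ∀ t : ℝ, B 0 t = Matrix.of ![![1 + g0 t, a0 t], ![b0 t, -2 + e0 t]])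
    (hB1 : ∀ t : ℝ, B 1 t = Matrix.of ![![-2 + g1 t, a1 t], ![b1 t, 1 + e1 t]])
    (u : ℝ → Fin 2)
    (hu : ∀ n : ℕ, ∀ t ∈ Set.Ioc ((n : ℝ)) ((n : ℝ) + 1),
        u t = if n % 2 = 0 then 0 else 1)
    (x : ℝ → EuclideanSpace ℝ (Fin 2))
    (hxcont : ContinuousOn x (Set.Ici (0:ℝ)))
    (hxode : ∀ t > (0:ℝ), (∀ n : ℕ, t ≠ (n : ℝ)) → (∀ k : ℕ, t ≠ r k) →
        HasDerivAt x (mulVecE (B (u t) t) (x t)) t) :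
    ∃ c < (0:ℝ), ∀ᶠ t : ℝ in Filter.atTop, ‖x t‖ ≤ Real.exp (c * t) := by
  obtain ⟨L, hL_tendsto, hL⟩ := exists_tendsto_zero_forall_abs_le _ hlim
  set V := weightedEnergy psi₀ psi₁ (fun s => x s 0) (fun s => x s 1)
  have hV' : ∀ t : ℝ, 0 < t → t ∉ range r ∪ range Nat.cast →
      ∃ v, HasDerivAt V v t ∧ v ≤ 2 * (1 + exp (3 / 2)) * L t * V t := by
    intro t ht hts
    obtain ⟨n, htn⟩ : ∃ n : ℕ, t ∈ Ioo (n : ℝ) (n + 1) := ⟨⌊t⌋₊,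
      (Nat.floor_le ht.le).lt_of_ne fun h => hts (Or.inr ⟨_, h⟩), Nat.lt_floor_add_one t⟩
    have hx := hxode t ht (fun n h => hts (Or.inr ⟨n, h.symm⟩)) fun k h => hts (Or.inl ⟨k, h.symm⟩)
    obtain ⟨h₀₀, h₀₁, h₁₀, h₁₁⟩ := abs_switched_entries_sub_le hB0 hB1 hu hL htn
    exact exists_hasDerivAt_weightedEnergy_le (hasDerivAt_psi₀ htn) (hasDerivAt_psi₁ htn)
      (hasDerivAt_coord_of_hasDerivAt_mulVecE hx 0) (hasDerivAt_coord_of_hasDerivAt_mulVecE hx 1)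
      h₀₀ h₀₁ h₁₀ h₁₁ (abs_psi₀_sub_psi₁_le t)
  have hs : ∀ b, ((range r ∪ range Nat.cast) ∩ Iic b).Finite := fun b => by
    rw [union_inter_distrib_right]
    exact (finite_range_inter_Iic_of_tendsto_atTop hrtop b).union
      (finite_range_inter_Iic_of_tendsto_atTop tendsto_natCast_atTop_atTop b)
  obtain ⟨C, hC⟩ := eventually_le_mul_exp_of_hasDerivAt_le hs
    (by unfold weightedEnergy; fun_prop) (weightedEnergy_nonneg _ _ _ _)
    (by simpa using hL_tendsto.const_mul _) hV' (ε := 1 / 2) (by norm_num)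
  refine exists_neg_eventually_le_exp_of_sq_le (C := exp 3 * C) (a := 1 / 2) (by norm_num) ?_
  filter_upwards [hC] with t hCt
  have hexp : exp (2 * (3 / 2 - t / 2)) * exp (1 / 2 * t) = exp 3 * exp (-(1 / 2 * t)) := by
    rw [← exp_add, ← exp_add]; ring_nf
  calc ‖x t‖ ^ 2 = x t 0 ^ 2 + x t 1 ^ 2 := by simp [EuclideanSpace.norm_sq_eq, Fin.sum_univ_two]
    _ ≤ exp (2 * (3 / 2 - t / 2)) * V t :=
        sq_add_sq_le_exp_mul_weightedEnergy (x₀ := fun s => x s 0) (x₁ := fun s => x s 1)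
          (psi₀_le t) (psi₁_le t)
    _ ≤ exp (2 * (3 / 2 - t / 2)) * (C * exp (1 / 2 * t)) := by gcongr
    _ = exp 3 * C * exp (-(1 / 2 * t)) := by linear_combination C * hexp

/-- the time-varying switched system built from
`B₀(t) = [[1+γ₀(t), α₀(t)], [β₀(t), −2+η₀(t)]]` and
`B₁(t) = [[−2+γ₁(t), α₁(t)], [β₁(t), 1+η₁(t)]]`, with all eight entry-perturbation
functions piecewise continuous on `(0,∞)` and converging to `0` at infinity, is
globally asymptotically exponentially stable under the periodic unit-time switching
law alternating `0, 1`.  Piecewise continuity is encoded by a strictly increasing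
sequence `r` of partition points tending to infinity between which all eight
functions are continuous; solutions satisfy the ODE away from the switching times
and the partition points. -/
theorem stmt14
    (g0 g1 e0 e1 a0 a1 b0 b1 : ℝ → ℝ)
    (r : ℕ → ℝ) (hr0 : r 0 = 0) (hrmono : StrictMono r)
    (hrtop : Filter.Tendsto r Filter.atTop Filter.atTop)
    (hpc : ∀ f ∈ ([g0, g1, e0, e1, a0, a1, b0, b1] : List (ℝ → ℝ)),
        ∀ k : ℕ, ContinuousOn f (Set.Ioo (r k) (r (k+1))))
    (hlim : ∀ f ∈ ([g0, g1, e0, e1, a0, a1, b0, b1] : List (ℝ → ℝ)),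
        Filter.Tendsto f Filter.atTop (nhds 0))
    (B : Fin 2 → ℝ → Matrix (Fin 2) (Fin 2) ℝ)
    (hB0 : ∀ t : ℝ, B 0 t = Matrix.of ![![1 + g0 t, a0 t], ![b0 t, -2 + e0 t]])
    (hB1 : ∀ t : ℝ, B 1 t = Matrix.of ![![-2 + g1 t, a1 t], ![b1 t, 1 + e1 t]])
    (u : ℝ → Fin 2)
    (hu : ∀ n : ℕ, ∀ t ∈ Set.Ioc ((n : ℝ)) ((n : ℝ) + 1),
        u t = if n % 2 = 0 then 0 else 1)
    (x : ℝ → EuclideanSpace ℝ (Fin 2))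
    (hxcont : ContinuousOn x (Set.Ici (0:ℝ)))
    (hxode : ∀ t > (0:ℝ), (∀ n : ℕ, t ≠ (n : ℝ)) → (∀ k : ℕ, t ≠ r k) →
        HasDerivAt x (mulVecE (B (u t) t) (x t)) t) :
    ∃ c < (0:ℝ), ∀ᶠ t : ℝ in Filter.atTop, ‖x t‖ ≤ Real.exp (c * t) :=
  stmt14_general g0 g1 e0 e1 a0 a1 b0 b1 r hrtop hlim B hB0 hB1 u hu x hxcont hxode
end
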